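/- Each Soft-Impute iterate is bounded: for the sequence Z^0 = 0, Z^{k+1} = S_λ(P_Ω(X) + P_Ω^⊥(Z^k)), the values f_λ(Z^k) are non-increasing, hence λ‖Z^k‖_* ≤ f_λ(Z^k) ≤ f_λ(0) = (1/2)‖P_Ω(X)‖_F², so for λ > 0 the sequence {Z^k} is bounded in nuclear norm by ‖P_Ω(X)‖_F²/(2λ). -/

import Mathlib

open Matrix BigOperators Finset

noncomputable section

/-- Squared Frobenius norm of a real matrix. -/
def frobSq {m n : ℕ} (A : Matrix (Fin m) (Fin n) ℝ) : ℝ :=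
  ∑ i, ∑ j, (A i j) ^ 2

/-- Frobenius norm. -/
def frobNorm {m n : ℕ} (A : Matrix (Fin m) (Fin n) ℝ) : ℝ :=
  Real.sqrt (frobSq A)

/-- The singular values of `A`, as square roots of the eigenvalues of `Aᴴ * A`. -/
def singVals {m n : ℕ} (A : Matrix (Fin m) (Fin n) ℝ) : Fin n → ℝ :=
  fun i => Real.sqrt (((show (Aᵀ * A).IsHermitian by
    simpa using Matrix.isHermitian_conjTranspose_mul_self A)).eigenvalues i)

/-- Nuclear norm: the sum of the singular values. -/
def nnorm {m n : ℕ} (A : Matrix (Fin m) (Fin n) ℝ) : ℝ :=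
  ∑ i, singVals A i

/-- Spectral norm: the largest singular value. -/
def specNorm {m n : ℕ} (A : Matrix (Fin m) (Fin n) ℝ) : ℝ :=
  ⨆ i, singVals A i

/-- Projection onto the observed entries `Ω`. -/
def pO {m n : ℕ} (Ω : Finset (Fin m × Fin n)) (Y : Matrix (Fin m) (Fin n) ℝ) :
    Matrix (Fin m) (Fin n) ℝ :=
  fun i j => if (i, j) ∈ Ω then Y i j else 0

/-- Complementary projection `P_Ω^⊥ = I - P_Ω`. -/
def pOc {m n : ℕ} (Ω : Finset (Fin m × Fin n)) (Y : Matrix (Fin m) (Fin n) ℝ) :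
    Matrix (Fin m) (Fin n) ℝ :=
  Y - pO Ω Y

/-- The objective `f_λ(Z) = ½‖P_Ω(Z) - P_Ω(X)‖_F² + λ‖Z‖_*`. -/
def fObj {m n : ℕ} (Ω : Finset (Fin m × Fin n)) (X : Matrix (Fin m) (Fin n) ℝ) (lam : ℝ)
    (Z : Matrix (Fin m) (Fin n) ℝ) : ℝ :=
  (1 / 2) * frobSq (pO Ω Z - pO Ω X) + lam * nnorm Z

/-- The surrogate `Q_λ(Z | Z̃) = ½‖P_Ω(X) + P_Ω^⊥(Z̃) - Z‖_F² + λ‖Z‖_*`. -/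
def qObj {m n : ℕ} (Ω : Finset (Fin m × Fin n)) (X : Matrix (Fin m) (Fin n) ℝ) (lam : ℝ)
    (Z Zt : Matrix (Fin m) (Fin n) ℝ) : ℝ :=
  (1 / 2) * frobSq (pO Ω X + pOc Ω Zt - Z) + lam * nnorm Z

/-- `IsSVD W U d V` : `W = U D Vᵀ` is a thin SVD of `W` with strictly positive
singular values `d` and orthonormal columns in `U` and `V`. -/
def IsSVD {m n r : ℕ} (W : Matrix (Fin m) (Fin n) ℝ) (U : Matrix (Fin m) (Fin r) ℝ)
    (d : Fin r → ℝ) (V : Matrix (Fin n) (Fin r) ℝ) : Prop :=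
  Uᵀ * U = 1 ∧ Vᵀ * V = 1 ∧ (∀ i, 0 < d i) ∧ W = U * Matrix.diagonal d * Vᵀ

/-- Trace inner product `⟨A, B⟩ = tr(AᵀB)`. -/
def minner {m n : ℕ} (A B : Matrix (Fin m) (Fin n) ℝ) : ℝ :=
  ∑ i, ∑ j, A i j * B i j

/-- `G` is a subgradient of the nuclear norm at `Z`. -/
def NucSubgrad {m n : ℕ} (Z G : Matrix (Fin m) (Fin n) ℝ) : Prop :=
  ∀ Y, nnorm Z + minner G (Y - Z) ≤ nnorm Y

end

/-!
Soft-Impute is a majorize–minimize scheme. The surrogate `Q_λ(· | Z̃)` lies above `f_λ` and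
touches it at `Z̃`, and `S_λ(W)` is the exact minimizer of `½‖W - Y‖_F² + λ‖Y‖_*`: the residual
`W - S_λ(W) = λ · U diag(min(d/λ, 1)) Vᵀ` is `λ` times a nuclear-norm subgradient at `S_λ(W)`,
since a contraction pairs with any `Y` to at most `‖Y‖_*` and with `S_λ(W)` to exactly
`‖S_λ(W)‖_*`. Hence `f_λ(Z^k)` decreases from `f_λ(0) = ½‖P_Ω(X)‖_F²`, while `λ‖Z^k‖_* ≤ f_λ(Z^k)`.
-/

section Frobenius

variable {m n : ℕ}

lemma minner_eq_trace (A B : Matrix (Fin m) (Fin n) ℝ) : minner A B = trace (Aᵀ * B) := by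
  simp only [minner, trace, diag_apply, mul_apply, transpose_apply]
  exact Finset.sum_comm

lemma frobSq_nonneg (A : Matrix (Fin m) (Fin n) ℝ) : 0 ≤ frobSq A := by
  unfold frobSq; positivity

lemma minner_smul_left (t : ℝ) (A B : Matrix (Fin m) (Fin n) ℝ) :
    minner (t • A) B = t * minner A B := by
  simp only [minner_eq_trace, transpose_smul, Matrix.smul_mul, trace_smul, smul_eq_mul]

lemma minner_sub_right (A B C : Matrix (Fin m) (Fin n) ℝ) :
    minner A (B - C) = minner A B - minner A C := by
  simp only [minner_eq_trace, Matrix.mul_sub, trace_sub]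

lemma frobSq_add (A B : Matrix (Fin m) (Fin n) ℝ) :
    frobSq (A + B) = frobSq A + 2 * minner A B + frobSq B := by
  simp only [frobSq, minner, Matrix.add_apply, add_sq, Finset.sum_add_distrib, Finset.mul_sum,
    mul_assoc]

end Frobenius

section Orthonormal

variable {k m n : ℕ}

lemma dotProduct_self_nonneg (x : Fin n → ℝ) : 0 ≤ x ⬝ᵥ x :=
  Finset.sum_nonneg fun _ _ => mul_self_nonneg _

lemma dotProduct_sq_le (x y : Fin n → ℝ) : (x ⬝ᵥ y) ^ 2 ≤ (x ⬝ᵥ x) * (y ⬝ᵥ y) := by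
  simpa only [dotProduct, sq] using Finset.sum_mul_sq_le_sq_mul_sq Finset.univ x y

lemma mulVec_dotProduct (A : Matrix (Fin m) (Fin n) ℝ) (x : Fin n → ℝ) (y : Fin m → ℝ) :
    (A *ᵥ x) ⬝ᵥ y = x ⬝ᵥ (Aᵀ *ᵥ y) := by
  rw [dotProduct_comm, dotProduct_mulVec, mulVec_transpose, dotProduct_comm]

lemma mulVec_dotProduct_mulVec_of_transpose_mul_self {U : Matrix (Fin m) (Fin n) ℝ}
    (hU : Uᵀ * U = 1) (x y : Fin n → ℝ) : (U *ᵥ x) ⬝ᵥ (U *ᵥ y) = x ⬝ᵥ y := by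
  rw [mulVec_dotProduct, mulVec_mulVec, hU, one_mulVec]

lemma transpose_mulVec_dotProduct_self_le {V : Matrix (Fin n) (Fin k) ℝ} (hV : Vᵀ * V = 1)
    (q : Fin n → ℝ) : (Vᵀ *ᵥ q) ⬝ᵥ (Vᵀ *ᵥ q) ≤ q ⬝ᵥ q := by
  set w := Vᵀ *ᵥ q
  have hproj : (V *ᵥ w) ⬝ᵥ q = w ⬝ᵥ w := mulVec_dotProduct V w q
  have hnorm : (V *ᵥ w) ⬝ᵥ (V *ᵥ w) = w ⬝ᵥ w :=
    mulVec_dotProduct_mulVec_of_transpose_mul_self hV w w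
  have hres : 0 ≤ (q - V *ᵥ w) ⬝ᵥ (q - V *ᵥ w) := dotProduct_self_nonneg _
  rw [sub_dotProduct, dotProduct_sub, dotProduct_sub, hproj, hnorm] at hres
  linarith [dotProduct_comm q (V *ᵥ w)]

lemma trace_eq_sum_dotProduct_mulVec {Q : Matrix (Fin k) (Fin n) ℝ} (hQ : Qᵀ * Q = 1)
    (M : Matrix (Fin n) (Fin n) ℝ) : trace M = ∑ i, Q i ⬝ᵥ (M *ᵥ Q i) := by
  calc trace M = trace (Q * M * Qᵀ) := by
        rw [trace_mul_cycle, hQ, Matrix.one_mul]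
    _ = ∑ i, Q i ⬝ᵥ (M *ᵥ Q i) := by
        refine Finset.sum_congr rfl fun i _ => ?_
        rw [diag_apply, mul_apply', dotProduct_mulVec]
        rfl

end Orthonormal

section SingularValues

variable {m n : ℕ}

lemma isHermitian_transpose_mul_self (A : Matrix (Fin m) (Fin n) ℝ) : (Aᵀ * A).IsHermitian := by
  simpa using isHermitian_conjTranspose_mul_self A

noncomputable def rightSingVec (A : Matrix (Fin m) (Fin n) ℝ) : Matrix (Fin n) (Fin n) ℝ :=
  fun i => ⇑((isHermitian_transpose_mul_self A).eigenvectorBasis i)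

lemma rightSingVec_transpose_mul_self (A : Matrix (Fin m) (Fin n) ℝ) :
    (rightSingVec A)ᵀ * rightSingVec A = 1 := by
  have hP := (isHermitian_transpose_mul_self A).eigenvectorUnitary.2
  rw [mem_unitaryGroup_iff, star_eq_conjTranspose, conjTranspose_eq_transpose_of_trivial] at hP
  exact hP

lemma rightSingVec_dotProduct_self (A : Matrix (Fin m) (Fin n) ℝ) (i : Fin n) :
    rightSingVec A i ⬝ᵥ rightSingVec A i = 1 := by
  have hunit := (isHermitian_transpose_mul_self A).eigenvectorBasis.orthonormal.1 i
  rw [EuclideanSpace.norm_eq] at hunit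
  simpa [rightSingVec, dotProduct, Real.sqrt_eq_one, sq] using hunit

lemma mulVec_rightSingVec_dotProduct_self (A : Matrix (Fin m) (Fin n) ℝ) (i : Fin n) :
    (A *ᵥ rightSingVec A i) ⬝ᵥ (A *ᵥ rightSingVec A i) =
      (isHermitian_transpose_mul_self A).eigenvalues i := by
  rw [mulVec_dotProduct, mulVec_mulVec, rightSingVec, IsHermitian.mulVec_eigenvectorBasis,
    dotProduct_smul, ← rightSingVec, rightSingVec_dotProduct_self, smul_eq_mul, mul_one]

lemma transpose_mul_self_mulVec_rightSingVec (A : Matrix (Fin m) (Fin n) ℝ) (i : Fin n) :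
    (Aᵀ * A) *ᵥ rightSingVec A i =
      ((A *ᵥ rightSingVec A i) ⬝ᵥ (A *ᵥ rightSingVec A i)) • rightSingVec A i := by
  rw [mulVec_rightSingVec_dotProduct_self]
  exact IsHermitian.mulVec_eigenvectorBasis _ i

lemma singVals_eq_sqrt (A : Matrix (Fin m) (Fin n) ℝ) (i : Fin n) :
    singVals A i = √((A *ᵥ rightSingVec A i) ⬝ᵥ (A *ᵥ rightSingVec A i)) := by
  rw [mulVec_rightSingVec_dotProduct_self]
  rfl

end SingularValues

section NuclearNorm

variable {m n r : ℕ}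

theorem minner_le_nnorm {G : Matrix (Fin m) (Fin n) ℝ}
    (hG : ∀ q, (G *ᵥ q) ⬝ᵥ (G *ᵥ q) ≤ q ⬝ᵥ q) (Y : Matrix (Fin m) (Fin n) ℝ) :
    minner G Y ≤ nnorm Y := by
  set v := rightSingVec Y
  calc minner G Y = ∑ i, (G *ᵥ v i) ⬝ᵥ (Y *ᵥ v i) := by
        rw [minner_eq_trace, trace_eq_sum_dotProduct_mulVec (rightSingVec_transpose_mul_self Y)]
        refine Finset.sum_congr rfl fun i _ => ?_
        rw [mulVec_dotProduct, mulVec_mulVec]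
    _ ≤ ∑ i, singVals Y i := Finset.sum_le_sum fun i _ => ?_
  rw [singVals_eq_sqrt]
  refine (le_abs_self _).trans (Real.abs_le_sqrt ?_)
  calc _ ≤ ((G *ᵥ v i) ⬝ᵥ (G *ᵥ v i)) * ((Y *ᵥ v i) ⬝ᵥ (Y *ᵥ v i)) := dotProduct_sq_le _ _
    _ ≤ 1 * ((Y *ᵥ v i) ⬝ᵥ (Y *ᵥ v i)) :=
        mul_le_mul_of_nonneg_right ((hG (v i)).trans_eq (rightSingVec_dotProduct_self Y i))
          (dotProduct_self_nonneg _)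
    _ = _ := one_mul _

lemma transpose_mul_svd {U : Matrix (Fin m) (Fin r) ℝ} (hU : Uᵀ * U = 1)
    (V : Matrix (Fin n) (Fin r) ℝ) (x y : Fin r → ℝ) :
    (U * diagonal x * Vᵀ)ᵀ * (U * diagonal y * Vᵀ) = V * diagonal (x * y) * Vᵀ := by
  calc (U * diagonal x * Vᵀ)ᵀ * (U * diagonal y * Vᵀ)
      = V * (diagonal x * (Uᵀ * U) * diagonal y) * Vᵀ := by
        simp only [transpose_mul, transpose_transpose, diagonal_transpose, Matrix.mul_assoc]
    _ = V * diagonal (x * y) * Vᵀ := by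
        rw [hU, Matrix.mul_one, diagonal_mul_diagonal]
        rfl

lemma trace_mul_diagonal_mul_transpose {V : Matrix (Fin n) (Fin r) ℝ} (hV : Vᵀ * V = 1)
    (x : Fin r → ℝ) : trace (V * diagonal x * Vᵀ) = ∑ j, x j := by
  rw [trace_mul_cycle, hV, Matrix.one_mul, trace_diagonal]

lemma minner_svd {U : Matrix (Fin m) (Fin r) ℝ} {V : Matrix (Fin n) (Fin r) ℝ}
    (hU : Uᵀ * U = 1) (hV : Vᵀ * V = 1) (x y : Fin r → ℝ) :
    minner (U * diagonal x * Vᵀ) (U * diagonal y * Vᵀ) = ∑ j, x j * y j := by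
  rw [minner_eq_trace, transpose_mul_svd hU, trace_mul_diagonal_mul_transpose hV]
  rfl

lemma sqrt_eq_dotProduct_diagonal_mulVec {e q : Fin r → ℝ} {μ : ℝ} (he : ∀ j, 0 ≤ e j)
    (heig : diagonal (e * e) *ᵥ q = μ • q) (hμ : q ⬝ᵥ (diagonal (e * e) *ᵥ q) = μ) :
    √μ = q ⬝ᵥ (diagonal e *ᵥ q) := by
  have hcoord : ∀ j, q j * (e j * q j) = √μ * (q j * q j) := by
    intro j
    have hj : e j * e j * q j = μ * q j := by
      simpa only [mulVec_diagonal, Pi.mul_apply, Pi.smul_apply, smul_eq_mul]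
        using congrFun heig j
    by_cases hq : q j = 0
    · simp [hq]
    · have hsq : e j * e j = μ := mul_right_cancel₀ hq hj
      rw [← hsq, Real.sqrt_mul_self (he j)]
      ring
  have hrhs : q ⬝ᵥ (diagonal e *ᵥ q) = √μ * (q ⬝ᵥ q) := by
    simp only [dotProduct, mulVec_diagonal, hcoord, Finset.mul_sum]
  rw [heig, dotProduct_smul, smul_eq_mul] at hμ
  rw [hrhs]
  by_cases hμ0 : μ = 0
  · simp [hμ0]
  · rw [mul_left_cancel₀ hμ0 (hμ.trans (mul_one μ).symm), mul_one]

theorem nnorm_svd {U : Matrix (Fin m) (Fin r) ℝ} {V : Matrix (Fin n) (Fin r) ℝ}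
    (hU : Uᵀ * U = 1) (hV : Vᵀ * V = 1) {e : Fin r → ℝ} (he : ∀ j, 0 ≤ e j) :
    nnorm (U * diagonal e * Vᵀ) = ∑ j, e j := by
  set A := U * diagonal e * Vᵀ
  have hgram : Aᵀ * A = V * diagonal (e * e) * Vᵀ := transpose_mul_svd hU V e e
  have hsing : ∀ i, singVals A i =
      (Vᵀ *ᵥ rightSingVec A i) ⬝ᵥ (diagonal e *ᵥ (Vᵀ *ᵥ rightSingVec A i)) := by
    intro i
    rw [singVals_eq_sqrt]
    apply sqrt_eq_dotProduct_diagonal_mulVec he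
    · have heig := congrArg (Vᵀ *ᵥ ·) (transpose_mul_self_mulVec_rightSingVec A i)
      simp only [hgram, mulVec_mulVec, ← Matrix.mul_assoc, hV, Matrix.one_mul, mulVec_smul]
        at heig
      rw [← heig, mulVec_mulVec]
    · rw [mulVec_dotProduct, transpose_transpose, mulVec_dotProduct A, mulVec_mulVec _ Aᵀ, hgram,
        mulVec_mulVec, mulVec_mulVec, Matrix.mul_assoc]
  calc nnorm A = ∑ i, rightSingVec A i ⬝ᵥ ((V * diagonal e * Vᵀ) *ᵥ rightSingVec A i) := by
        refine Finset.sum_congr rfl fun i _ => ?_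
        rw [hsing, mulVec_dotProduct, transpose_transpose, mulVec_mulVec, mulVec_mulVec,
          Matrix.mul_assoc]
    _ = trace (V * diagonal e * Vᵀ) :=
        (trace_eq_sum_dotProduct_mulVec (rightSingVec_transpose_mul_self A) _).symm
    _ = ∑ j, e j := trace_mul_diagonal_mul_transpose hV e

lemma svd_mulVec_dotProduct_self_le {U : Matrix (Fin m) (Fin r) ℝ}
    {V : Matrix (Fin n) (Fin r) ℝ} (hU : Uᵀ * U = 1) (hV : Vᵀ * V = 1) {c : Fin r → ℝ}
    (hc : ∀ j, c j ^ 2 ≤ 1) (q : Fin n → ℝ) :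
    ((U * diagonal c * Vᵀ) *ᵥ q) ⬝ᵥ ((U * diagonal c * Vᵀ) *ᵥ q) ≤ q ⬝ᵥ q := by
  rw [← mulVec_mulVec, ← mulVec_mulVec, mulVec_dotProduct_mulVec_of_transpose_mul_self hU]
  set w := Vᵀ *ᵥ q
  calc (diagonal c *ᵥ w) ⬝ᵥ (diagonal c *ᵥ w) ≤ w ⬝ᵥ w := by
        simp only [dotProduct, mulVec_diagonal]
        exact Finset.sum_le_sum fun j _ => by nlinarith [hc j, mul_self_nonneg (w j)]
    _ ≤ q ⬝ᵥ q := transpose_mulVec_dotProduct_self_le hV q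

lemma nnorm_zero : nnorm (0 : Matrix (Fin m) (Fin n) ℝ) = 0 := by
  simp [nnorm, singVals_eq_sqrt]

end NuclearNorm

section SoftThreshold

variable {m n r : ℕ}

lemma nucSubgrad_of_minner {Z G : Matrix (Fin m) (Fin n) ℝ}
    (hle : ∀ Y, minner G Y ≤ nnorm Y) (heq : minner G Z = nnorm Z) : NucSubgrad Z G := by
  intro Y
  rw [minner_sub_right, heq]
  linarith [hle Y]

theorem prox_le_of_nucSubgrad {W Z G : Matrix (Fin m) (Fin n) ℝ} {lam : ℝ}
    (hG : NucSubgrad Z G) (hW : W - Z = lam • G) (hlam : 0 ≤ lam)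
    (Y : Matrix (Fin m) (Fin n) ℝ) :
    1 / 2 * frobSq (W - Z) + lam * nnorm Z ≤ 1 / 2 * frobSq (W - Y) + lam * nnorm Y := by
  have hsplit : frobSq (W - Y) =
      frobSq (W - Z) + 2 * (lam * minner G (Z - Y)) + frobSq (Z - Y) := by
    rw [show W - Y = (W - Z) + (Z - Y) by abel, frobSq_add, hW, minner_smul_left]
  have hdescent : nnorm Z - nnorm Y ≤ minner G (Z - Y) := by
    have := hG Y
    rw [minner_sub_right] at this ⊢
    linarith
  nlinarith [mul_le_mul_of_nonneg_left hdescent hlam, frobSq_nonneg (Z - Y)]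

/-- The paper's `S_λ(W)`, for `W = U diag(d) Vᵀ`. -/
def softThreshold (lam : ℝ) (U : Matrix (Fin m) (Fin r) ℝ) (d : Fin r → ℝ)
    (V : Matrix (Fin n) (Fin r) ℝ) : Matrix (Fin m) (Fin n) ℝ :=
  U * diagonal (fun i => max (d i - lam) 0) * Vᵀ

theorem softThreshold_le {W : Matrix (Fin m) (Fin n) ℝ} {U : Matrix (Fin m) (Fin r) ℝ}
    {d : Fin r → ℝ} {V : Matrix (Fin n) (Fin r) ℝ} (hsvd : IsSVD W U d V) {lam : ℝ}
    (hlam : 0 < lam) (Y : Matrix (Fin m) (Fin n) ℝ) :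
    1 / 2 * frobSq (W - softThreshold lam U d V) + lam * nnorm (softThreshold lam U d V) ≤
      1 / 2 * frobSq (W - Y) + lam * nnorm Y := by
  obtain ⟨hU, hV, hd, rfl⟩ := hsvd
  set e : Fin r → ℝ := fun j => max (d j - lam) 0
  set g : Fin r → ℝ := fun j => min (d j / lam) 1
  have hg_sq : ∀ j, g j ^ 2 ≤ 1 := fun j => by
    have hg0 : 0 ≤ g j := le_min (div_nonneg (hd j).le hlam.le) zero_le_one
    have hg1 : g j ≤ 1 := min_le_right _ _
    nlinarith
  have hge : ∀ j, g j * e j = e j := fun j => by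
    rcases le_total (d j) lam with h | h
    · simp [e, h]
    · simp [g, (one_le_div hlam).2 h]
  have hde : (fun j => d j - e j) = lam • g := funext fun j => by
    rcases le_total (d j) lam with h | h
    · simp [e, g, h, (div_le_one hlam).2 h, mul_div_cancel₀ _ hlam.ne']
    · simp [e, g, h, (one_le_div hlam).2 h]
  refine prox_le_of_nucSubgrad (G := U * diagonal g * Vᵀ) ?_ ?_ hlam.le Y
  · refine nucSubgrad_of_minner (minner_le_nnorm (svd_mulVec_dotProduct_self_le hU hV hg_sq)) ?_
    rw [softThreshold, minner_svd hU hV, nnorm_svd hU hV fun j => le_max_right _ _]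
    exact Finset.sum_congr rfl fun j _ => hge j
  · rw [softThreshold, ← Matrix.sub_mul, ← Matrix.mul_sub, diagonal_sub, hde, diagonal_smul,
      Matrix.mul_smul, Matrix.smul_mul]

end SoftThreshold

section Surrogate

variable {m n : ℕ} (Ω : Finset (Fin m × Fin n)) (X : Matrix (Fin m) (Fin n) ℝ) (lam : ℝ)

lemma fObj_le_qObj (Z Zt : Matrix (Fin m) (Fin n) ℝ) : fObj Ω X lam Z ≤ qObj Ω X lam Z Zt := by
  have hfit : frobSq (pO Ω Z - pO Ω X) ≤ frobSq (pO Ω X + pOc Ω Zt - Z) := by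
    refine Finset.sum_le_sum fun i _ => Finset.sum_le_sum fun j _ => ?_
    simp only [pO, pOc, Matrix.sub_apply, Matrix.add_apply]
    split_ifs
    · nlinarith
    · simpa using sq_nonneg (Zt i j - Z i j)
  unfold fObj qObj
  linarith

lemma qObj_self (Z : Matrix (Fin m) (Fin n) ℝ) : qObj Ω X lam Z Z = fObj Ω X lam Z := by
  have hfit : frobSq (pO Ω X + pOc Ω Z - Z) = frobSq (pO Ω Z - pO Ω X) := by
    refine Finset.sum_congr rfl fun i _ => Finset.sum_congr rfl fun j _ => ?_
    simp only [pO, pOc, Matrix.sub_apply, Matrix.add_apply]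
    split_ifs <;> ring
  rw [qObj, fObj, hfit]

lemma fObj_zero : fObj Ω X lam 0 = 1 / 2 * frobSq (pO Ω X) := by
  have hfit : frobSq (pO Ω 0 - pO Ω X) = frobSq (pO Ω X) := by
    refine Finset.sum_congr rfl fun i _ => Finset.sum_congr rfl fun j _ => ?_
    simp only [pO, Matrix.sub_apply, Matrix.zero_apply]
    split_ifs <;> ring
  rw [fObj, hfit, nnorm_zero, mul_zero, add_zero]

end Surrogate

/-- boundedness of the Soft-Impute iterates: `f_λ(Z^k)` is
non-increasing, `λ‖Z^k‖_* ≤ f_λ(Z^k) ≤ f_λ(0) = ½‖P_Ω(X)‖_F²`, hence for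
`λ > 0` the iterates are bounded in nuclear norm by `‖P_Ω(X)‖_F²/(2λ)`. -/
theorem soft_impute_bounded {m n : ℕ} (Ω : Finset (Fin m × Fin n))
    (X : Matrix (Fin m) (Fin n) ℝ) (lam : ℝ) (hlam : 0 < lam)
    (Z : ℕ → Matrix (Fin m) (Fin n) ℝ) (h0 : Z 0 = 0)
    (hiter : ∀ k, ∃ (r : ℕ) (U : Matrix (Fin m) (Fin r) ℝ) (d : Fin r → ℝ)
        (V : Matrix (Fin n) (Fin r) ℝ),
      IsSVD (pO Ω X + pOc Ω (Z k)) U d V ∧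
      Z (k + 1) = U * Matrix.diagonal (fun i => max (d i - lam) 0) * Vᵀ) :
    (∀ k, fObj Ω X lam (Z (k + 1)) ≤ fObj Ω X lam (Z k)) ∧
    (∀ k, lam * nnorm (Z k) ≤ fObj Ω X lam (Z k)) ∧
    (∀ k, fObj Ω X lam (Z k) ≤ (1 / 2) * frobSq (pO Ω X)) ∧
    (∀ k, nnorm (Z k) ≤ frobSq (pO Ω X) / (2 * lam)) := by
  have hmono : ∀ k, fObj Ω X lam (Z (k + 1)) ≤ fObj Ω X lam (Z k) := fun k => by
    obtain ⟨r, U, d, V, hsvd, hstep⟩ := hiter k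
    calc fObj Ω X lam (Z (k + 1))
        ≤ qObj Ω X lam (Z (k + 1)) (Z k) := fObj_le_qObj Ω X lam _ _
      _ ≤ qObj Ω X lam (Z k) (Z k) := hstep ▸ softThreshold_le hsvd hlam (Z k)
      _ = fObj Ω X lam (Z k) := qObj_self Ω X lam (Z k)
  have hnnorm : ∀ k, lam * nnorm (Z k) ≤ fObj Ω X lam (Z k) := fun k => by
    have := frobSq_nonneg (pO Ω (Z k) - pO Ω X)
    unfold fObj
    linarith
  have hinit : ∀ k, fObj Ω X lam (Z k) ≤ 1 / 2 * frobSq (pO Ω X) := fun k => by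
    induction k with
    | zero => rw [h0, fObj_zero]
    | succ k ih => exact (hmono k).trans ih
  refine ⟨hmono, hnnorm, hinit, fun k => ?_⟩
  rw [le_div_iff₀ (by positivity)]
  linarith [hnnorm k, hinit k]
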